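/- arXiv:1902.02159 — 8 statements merged into one kernel-verified Lean document; each statement's English description precedes it below -/
import Mathlib

section
/- If (u_n) is a sequence of positive reals that is increasing and tends to +∞, then the series ∑ (u_n - u_{n-1})/u_n diverges. -/
/-!
If `u N ≥ 2 u n`, then bounding every denominator `u i` with `n < i ≤ N` by `u N` and telescoping
shows that the block of terms with indices in `(n, N]` sums to at least `(u N - u n) / u N ≥ 1/2`.
Since `u → ∞`, such blocks can be found beyond any `n`, so the nonnegative partial sums are unbounded.
-/

open Filter Finset

theorem Finset.sum_Ioc_sub_pred {M : Type*} [AddCommGroup M] (u : ℕ → M) {n N : ℕ} (h : n ≤ N) :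
    ∑ i ∈ Ioc n N, (u i - u (i - 1)) = u N - u n := by
  induction N, h using Nat.le_induction with
  | base => simp
  | succ N hnN ih =>
    rw [sum_Ioc_succ_top hnN, ih, Nat.add_sub_cancel]
    abel

theorem sub_div_le_sum_Ioc_sub_pred_div {u : ℕ → ℝ} (hmono : Monotone u) {n N : ℕ}
    (hn : 0 < u n) (h : n ≤ N) :
    (u N - u n) / u N ≤ ∑ i ∈ Ioc n N, (u i - u (i - 1)) / u i := calc
  (u N - u n) / u N = ∑ i ∈ Ioc n N, (u i - u (i - 1)) / u N := by
    rw [← sum_div, sum_Ioc_sub_pred u h]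
  _ ≤ ∑ i ∈ Ioc n N, (u i - u (i - 1)) / u i := by
    refine sum_le_sum fun i hi => ?_
    obtain ⟨hni, hiN⟩ := mem_Ioc.1 hi
    exact div_le_div_of_nonneg_left (sub_nonneg.2 (hmono (Nat.sub_le i 1)))
      (hn.trans_le (hmono hni.le)) (hmono hiN)

theorem Monotone.tendsto_atTop_of_forall_exists_add_le {ι : Type*} [Preorder ι] [Nonempty ι]
    {S : ι → ℝ} (hS : Monotone S) {c : ℝ} (hc : 0 < c) (h : ∀ n, ∃ N, S n + c ≤ S N) :
    Tendsto S atTop atTop := by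
  refine tendsto_atTop_atTop_of_monotone' hS fun hbdd => ?_
  obtain ⟨n, hn⟩ := exists_lt_of_lt_ciSup (sub_lt_self (⨆ i, S i) hc)
  obtain ⟨N, hN⟩ := h n
  linarith [le_ciSup hbdd N]

theorem stmt_0 (u : ℕ → ℝ) (hpos : ∀ n, 0 < u n) (hmono : Monotone u)
    (htop : Filter.Tendsto u Filter.atTop Filter.atTop) :
    Filter.Tendsto (fun n => ∑ i ∈ Finset.Icc 1 n, (u i - u (i - 1)) / u i)
      Filter.atTop Filter.atTop := by
  have hterm_nonneg : ∀ i, 0 ≤ (u i - u (i - 1)) / u i := fun i =>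
    div_nonneg (sub_nonneg.2 (hmono (Nat.sub_le i 1))) (hpos i).le
  have hpartial_mono : Monotone fun n => ∑ i ∈ Icc 1 n, (u i - u (i - 1)) / u i :=
    fun a b hab => sum_le_sum_of_subset_of_nonneg (Icc_subset_Icc_right hab)
      fun i _ _ => hterm_nonneg i
  refine hpartial_mono.tendsto_atTop_of_forall_exists_add_le one_half_pos fun n => ?_
  obtain ⟨N, hnN, hdouble⟩ :=
    ((eventually_ge_atTop n).and (htop.eventually_ge_atTop (2 * u n))).exists
  have hhalf : 1 / 2 ≤ (u N - u n) / u N := by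
    rw [le_div_iff₀ ((hpos n).trans_le (hmono hnN))]
    linarith [hpos n]
  -- `Icc 1 n` is definitionally `Ioc 0 n`
  have hsplit : ∑ i ∈ Icc 1 n, (u i - u (i - 1)) / u i + ∑ i ∈ Ioc n N, (u i - u (i - 1)) / u i
      = ∑ i ∈ Icc 1 N, (u i - u (i - 1)) / u i :=
    sum_Ioc_consecutive _ (Nat.zero_le n) hnN
  exact ⟨N, by linarith [sub_div_le_sum_Ioc_sub_pred_div hmono (hpos n) hnN]⟩
end

section
/- In the targeting game, if there exists N such that ∑_{i=1}^N f_i ≥ A·⌈A/(B−A)⌉, then there exist a positive integer k and a rank N such that A ≤ (∑_{i=1}^N f_i)/k < B. -/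
theorem stmt_4 (A B : ℝ) (f : ℕ → ℝ) (hA : 0 < A) (hAB : A < B) (hf : ∀ i, 0 ≤ f i)
    (h : ∃ N : ℕ, A * (⌈A / (B - A)⌉ : ℝ) ≤ ∑ i ∈ Finset.Icc 1 N, f i) :
    ∃ (k : ℕ) (N : ℕ), 1 ≤ k ∧
      A ≤ (∑ i ∈ Finset.Icc 1 N, f i) / k ∧ (∑ i ∈ Finset.Icc 1 N, f i) / k < B := by
  obtain ⟨N, hN⟩ := h
  set S : ℝ := ∑ i ∈ Finset.Icc 1 N, f i with hS
  have hBA : 0 < B - A := sub_pos.mpr hAB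
  have hpos : 0 < A / (B - A) := div_pos hA hBA
  have hceq : ((⌈A / (B - A)⌉₊ : ℕ) : ℝ) = (⌈A / (B - A)⌉ : ℝ) :=
    natCast_ceil_eq_intCast_ceil hpos.le
  have hm1 : 1 ≤ ⌈A / (B - A)⌉₊ := Nat.one_le_ceil_iff.mpr hpos
  have hSA : ((⌈A / (B - A)⌉₊ : ℕ) : ℝ) ≤ S / A := by
    rw [hceq, le_div_iff₀ hA]; linarith [hN]
  set k : ℕ := ⌊S / A⌋₊ with hk
  have hmk : ⌈A / (B - A)⌉₊ ≤ k := Nat.le_floor hSA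
  have hk1 : 1 ≤ k := le_trans hm1 hmk
  have hkpos : (0 : ℝ) < k := by exact_mod_cast hk1
  have hfl : (k : ℝ) ≤ S / A := Nat.floor_le (div_nonneg (Finset.sum_nonneg fun i _ => hf i) hA.le)
  have hkA : (k : ℝ) * A ≤ S := by
    calc (k : ℝ) * A ≤ (S / A) * A := by nlinarith
    _ = S := by field_simp
  have hceil : A / (B - A) ≤ (k : ℝ) := by
    calc A / (B - A) ≤ (⌈A / (B - A)⌉ : ℝ) := Int.le_ceil _
    _ = ((⌈A / (B - A)⌉₊ : ℕ) : ℝ) := hceq.symm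
    _ ≤ (k : ℝ) := by exact_mod_cast hmk
  have hAk : A ≤ (k : ℝ) * (B - A) := by
    rw [div_le_iff₀ hBA] at hceil; linarith
  have hSlt : S < (k : ℝ) * B := by
    have hfl2 := Nat.lt_floor_add_one (S / A)
    have : S < ((k : ℝ) + 1) * A := by
      rw [div_lt_iff₀ hA] at hfl2; push_cast at hfl2 ⊢; linarith
    nlinarith
  exact ⟨k, N, hk1, (le_div_iff₀ hkpos).mpr (by linarith),
    (div_lt_iff₀ hkpos).mpr (by linarith)⟩
end

section
/- In the targeting game with greedy strategy, if the number of indices i with f_i ≥ B is at least log₂(B/(B−A)), then the player wins: there is a rank N with A ≤ u_N < B, where at each turn the player chooses the smallest positive integer a_i such that u_i = u_{i−1} + f_i·δ_{i−1}/a_i < B. -/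
theorem stmt_5 (A B : ℝ) (f : ℕ → ℝ) (a : ℕ → ℕ) (u δ : ℕ → ℝ)
    (hA : 0 < A) (hAB : A < B) (hf : ∀ i, 0 ≤ f i)
    (hu0 : u 0 = 0) (hδ0 : δ 0 = 1)
    (ha : ∀ i, 1 ≤ i → 1 ≤ a i)
    (hδ : ∀ i, 1 ≤ i → δ i = δ (i - 1) / a i)
    (hu : ∀ i, 1 ≤ i → u i = u (i - 1) + f i * δ i)
    (hlt : ∀ i, 1 ≤ i → u i < B)
    (hmin : ∀ i, 1 ≤ i → ∀ m : ℕ, 1 ≤ m → m < a i →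
      ¬ (u (i - 1) + f i * (δ (i - 1) / m) < B))
    (hcount : ∃ S : Finset ℕ, (∀ i ∈ S, 1 ≤ i ∧ B ≤ f i) ∧
      Real.logb 2 (B / (B - A)) ≤ S.card) :
    ∃ N : ℕ, A ≤ u N ∧ u N < B := by
  obtain ⟨S, hS, hcard⟩ := hcount
  have hB : 0 < B := hA.trans hAB
  have hBA : 0 < B - A := sub_pos.2 hAB
  -- δ is positive
  have hδpos : ∀ i, 0 < δ i := by
    intro i
    induction i with
    | zero => rw [hδ0]; norm_num
    | succ n ih =>
      have h1 : 1 ≤ n + 1 := by omega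
      have hapos : (0:ℝ) < (a (n+1) : ℝ) := by
        exact_mod_cast Nat.lt_of_lt_of_le Nat.zero_lt_one (ha _ h1)
      rw [hδ (n+1) h1]
      simp only [Nat.add_sub_cancel]
      exact div_pos ih hapos
  have hg0 : B - u 0 = B := by rw [hu0]; ring
  -- key: the gap shrinks by a factor of a n each step
  have hkey : ∀ n, 1 ≤ n → (B - u n) * (a n : ℝ) ≤ B - u (n - 1) := by
    intro n hn
    have hδn : δ n = δ (n-1) / (a n : ℝ) := hδ n hn
    have hun : u n = u (n-1) + f n * δ n := hu n hn
    rcases Nat.lt_or_ge (a n) 2 with h2 | h2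
    · have h1 : a n = 1 := by have := ha n hn; omega
      rw [h1]
      push_cast
      rw [mul_one, hun]
      have hfd : 0 ≤ f n * δ n := mul_nonneg (hf n) (hδpos n).le
      linarith
    · have hm1 : 1 ≤ a n - 1 := by omega
      have hm2 : a n - 1 < a n := by omega
      have hm := hmin n hn (a n - 1) hm1 hm2
      push_neg at hm
      have hk1 : (0:ℝ) < ((a n - 1 : ℕ) : ℝ) := by exact_mod_cast hm1
      have hcast : ((a n - 1 : ℕ) : ℝ) = (a n : ℝ) - 1 := by
        have := ha n hn; push_cast [Nat.cast_sub this]; ring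
      -- from hm : B ≤ u (n-1) + f n * (δ (n-1) / (a n - 1))
      have hfd : (B - u (n-1)) * ((a n : ℝ) - 1) ≤ f n * δ (n-1) := by
        rw [← hcast]
        have h' : B - u (n-1) ≤ f n * (δ (n-1) / ((a n - 1 : ℕ) : ℝ)) := by linarith [hm]
        calc (B - u (n-1)) * ((a n - 1 : ℕ) : ℝ)
            ≤ f n * (δ (n-1) / ((a n - 1 : ℕ) : ℝ)) * ((a n - 1 : ℕ) : ℝ) :=
              mul_le_mul_of_nonneg_right h' hk1.le
          _ = f n * δ (n-1) := by rw [mul_assoc, div_mul_cancel₀ _ (ne_of_gt hk1)]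
      have hapos : (0:ℝ) < (a n : ℝ) := by positivity
      rw [hun, hδn]
      have : f n * (δ (n-1) / (a n : ℝ)) * (a n : ℝ) = f n * δ (n-1) := by
        field_simp
      nlinarith [hfd]
  -- gap is positive
  have hgpos : ∀ n, 0 < B - u n := by
    intro n
    rcases Nat.eq_zero_or_pos n with h | h
    · rw [h, hg0]; exact hB
    · linarith [hlt n h]
  -- monotonicity of the gap
  have hmono : ∀ n, 1 ≤ n → B - u n ≤ B - u (n - 1) := by
    intro n hn
    have h1 : (1:ℝ) ≤ (a n : ℝ) := by exact_mod_cast ha n hn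
    nlinarith [hkey n hn, hgpos n]
  -- invariant: gap ≤ B * δ
  have hinv : ∀ n, B - u n ≤ B * δ n := by
    intro n
    induction n with
    | zero => rw [hg0, hδ0]; ring_nf; exact le_refl B
    | succ m ih =>
      have hn : 1 ≤ m + 1 := by omega
      have hδn : δ (m+1) = δ m / (a (m+1) : ℝ) := by
        have := hδ (m+1) hn; simpa using this
      have hk : (B - u (m+1)) * (a (m+1) : ℝ) ≤ B - u m := by
        have := hkey (m+1) hn; simpa using this
      have hapos : (0:ℝ) < (a (m+1) : ℝ) := by
        exact_mod_cast Nat.lt_of_lt_of_le Nat.zero_lt_one (ha _ hn)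
      rw [hδn, ← mul_div_assoc, le_div_iff₀ hapos]
      linarith [hk, ih]
  -- halving when f n ≥ B
  have hhalf : ∀ n, 1 ≤ n → B ≤ f n → 2 * (B - u n) ≤ B - u (n - 1) := by
    intro n hn hfn
    have ha2 : 2 ≤ a n := by
      by_contra h
      have h1 : a n = 1 := by have := ha n hn; omega
      have hδn : δ n = δ (n-1) := by rw [hδ n hn, h1]; simp
      have hun : u n = u (n-1) + f n * δ n := hu n hn
      have hd := hδpos (n-1)
      have hi := hinv (n-1)
      have : B ≤ u n := by
        rw [hun, hδn]
        nlinarith [mul_le_mul_of_nonneg_right hfn hd.le]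
      linarith [hlt n hn]
    have h2 : (2:ℝ) ≤ (a n : ℝ) := by exact_mod_cast ha2
    nlinarith [hkey n hn, hgpos n]
  -- main estimate by induction
  have hmain : ∀ N, (B - u N) * 2 ^ ((S.filter (fun i => i ≤ N)).card) ≤ B := by
    intro N
    induction N with
    | zero =>
      have he : S.filter (fun i => i ≤ 0) = ∅ :=
        Finset.filter_eq_empty_iff.2 (fun {i} hi => by have := (hS i hi).1; omega)
      rw [he]
      simp [hg0]
    | succ m ih =>
      by_cases h : m + 1 ∈ S
      · have hset : S.filter (fun i => i ≤ m + 1)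
            = insert (m+1) (S.filter (fun i => i ≤ m)) := by
          ext i
          simp only [Finset.mem_filter, Finset.mem_insert]
          constructor
          · rintro ⟨hi, hle⟩
            rcases Nat.lt_or_ge i (m+1) with h' | h'
            · exact Or.inr ⟨hi, by omega⟩
            · exact Or.inl (by omega)
          · rintro (rfl | ⟨hi, hle⟩)
            · exact ⟨h, le_refl _⟩
            · exact ⟨hi, by omega⟩
        have hnotin : m + 1 ∉ S.filter (fun i => i ≤ m) := by
          simp
        rw [hset, Finset.card_insert_of_notMem hnotin, pow_succ]
        have hhf := hhalf (m+1) (by omega) (hS _ h).2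
        simp only [Nat.add_sub_cancel] at hhf
        have hp : (0:ℝ) ≤ 2 ^ ((S.filter (fun i => i ≤ m)).card) := by positivity
        nlinarith [ih, hgpos (m+1)]
      · have hset : S.filter (fun i => i ≤ m + 1) = S.filter (fun i => i ≤ m) := by
          ext i
          simp only [Finset.mem_filter]
          constructor
          · rintro ⟨hi, hle⟩
            refine ⟨hi, ?_⟩
            by_contra h'
            have hii : i = m + 1 := by omega
            exact h (hii ▸ hi)
          · rintro ⟨hi, hle⟩; exact ⟨hi, by omega⟩
        rw [hset]
        have hm := hmono (m+1) (by omega)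
        simp only [Nat.add_sub_cancel] at hm
        have hp : (0:ℝ) ≤ 2 ^ ((S.filter (fun i => i ≤ m)).card) := by positivity
        nlinarith [ih]
  -- S is nonempty
  have hlog : 0 < Real.logb 2 (B / (B - A)) := by
    apply Real.logb_pos (by norm_num)
    rw [lt_div_iff₀ hBA]
    linarith
  have hSne : S.Nonempty := by
    rw [← Finset.card_pos]
    by_contra h
    have : S.card = 0 := by omega
    rw [this] at hcard
    simp at hcard
    linarith
  set N := S.max' hSne with hN
  have hNmem : N ∈ S := S.max'_mem hSne
  have hN1 : 1 ≤ N := (hS N hNmem).1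
  have hfilt : S.filter (fun i => i ≤ N) = S :=
    Finset.filter_true_of_mem (fun i hi => S.le_max' i hi)
  have hmainN := hmain N
  rw [hfilt] at hmainN
  -- 2 ^ |S| ≥ B / (B - A)
  have hpow : B / (B - A) ≤ (2:ℝ) ^ S.card := by
    have hx : (0:ℝ) < B / (B - A) := div_pos hB hBA
    have := Real.rpow_logb (by norm_num : (0:ℝ) < 2) (by norm_num) hx
    calc B / (B - A) = (2:ℝ) ^ Real.logb 2 (B / (B - A)) := this.symm
      _ ≤ (2:ℝ) ^ (S.card : ℝ) :=
          Real.rpow_le_rpow_of_exponent_le (by norm_num) hcard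
      _ = (2:ℝ) ^ S.card := by rw [Real.rpow_natCast]
  have hppos : (0:ℝ) < 2 ^ S.card := by positivity
  have hgap : B - u N ≤ B - A := by
    have h1 : B ≤ 2 ^ S.card * (B - A) := by
      rw [div_le_iff₀ hBA] at hpow
      linarith
    nlinarith [hmainN]
  exact ⟨N, by linarith, hlt N hN1⟩
end

section
/- In a spherically symmetric tree T((a_i)) with firefighter sequence (f_i), the total amount of fire that spreads to level i is max{0, F_i}, where F_0 = 1 and F_i = a_i·F_{i−1} − f_i. -/
lemma sum_div_range' (g : ℕ → ℝ) (n m : ℕ) (hm : 0 < m) :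
    ∑ v ∈ Finset.range (n * m), g (v / m) = m * ∑ u ∈ Finset.range n, g u := by
  induction n with
  | zero => simp
  | succ n ih =>
    rw [Nat.succ_mul, Finset.sum_range_add, ih, Finset.sum_range_succ]
    have h : ∀ x ∈ Finset.range m, g ((n * m + x) / m) = g n := by
      intro x hx
      rw [mul_comm n m, Nat.mul_add_div hm, Nat.div_eq_of_lt (Finset.mem_range.mp hx)]
      simp
    rw [Finset.sum_congr rfl h, Finset.sum_const, Finset.card_range, nsmul_eq_mul]
    ring

theorem stmt_7 (a : ℕ → ℕ) (f : ℕ → ℝ) (P : ℕ → ℕ) (F : ℕ → ℝ)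
    (ha : ∀ i, 1 ≤ a i) (hf : ∀ i, 0 ≤ f i)
    (hP0 : P 0 = 1) (hP : ∀ i, 1 ≤ i → P i = P (i - 1) * a i)
    (hF0 : F 0 = 1) (hF : ∀ i, 1 ≤ i → F i = a i * F (i - 1) - f i) :
    (∀ p b : ℕ → ℕ → ℝ,
      (∀ i v, 0 ≤ p i v) →
      (∀ i, 1 ≤ i → ∑ v ∈ Finset.range (P i), p i v ≤ f i) →
      (∀ v, b 0 v = 1) →
      (∀ i, 1 ≤ i → ∀ v, b i v = max 0 (b (i - 1) (v / a i) - p i v)) →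
      ∀ i, max 0 (F i) ≤ ∑ v ∈ Finset.range (P i), b i v) ∧
    (∃ p b : ℕ → ℕ → ℝ,
      (∀ i v, 0 ≤ p i v) ∧
      (∀ i, 1 ≤ i → ∑ v ∈ Finset.range (P i), p i v ≤ f i) ∧
      (∀ v, b 0 v = 1) ∧
      (∀ i, 1 ≤ i → ∀ v, b i v = max 0 (b (i - 1) (v / a i) - p i v)) ∧
      (∀ i, ∑ v ∈ Finset.range (P i), b i v = max 0 (F i))) := by
  have hPpos : ∀ i, 0 < P i := by
    intro i
    induction i with
    | zero => simp [hP0]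
    | succ n ih =>
      rw [hP (n+1) (by omega)]
      simpa using Nat.mul_pos ih (ha (n+1))
  -- key fact: max 0 (F i) = max 0 (a i * max 0 (F (i-1)) - f i) for i ≥ 1
  have hGkey : ∀ n : ℕ, max 0 (F (n+1)) = max 0 ((a (n+1) : ℝ) * max 0 (F n) - f (n+1)) := by
    intro n
    have hFr : F (n+1) = (a (n+1) : ℝ) * F n - f (n+1) := by
      simpa using hF (n+1) (by omega)
    rcases le_or_gt 0 (F n) with h | h
    · rw [max_eq_right h, hFr]
    · rw [max_eq_left h.le, hFr]
      have ha1 : (0:ℝ) < (a (n+1) : ℝ) := by exact_mod_cast (ha (n+1))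
      have : (a (n+1) : ℝ) * F n - f (n+1) ≤ 0 - f (n+1) := by
        have := mul_neg_of_pos_of_neg ha1 h
        linarith
      rw [max_eq_left (by linarith [hf (n+1)]), max_eq_left (by simpa using hf (n+1))]
  constructor
  · intro p b hp hpf hb0 hbrec i
    induction i with
    | zero =>
      rw [hP0, hF0]
      simp [hb0]
    | succ n ih =>
      have h1 : (1:ℕ) ≤ n + 1 := by omega
      have hbn : ∀ v, 0 ≤ b (n+1) v := by
        intro v
        rw [hbrec (n+1) h1 v]
        exact le_max_left _ _
      have hsplit : ∑ v ∈ Finset.range (P (n+1)), b n (v / a (n+1))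
          = (a (n+1) : ℝ) * ∑ u ∈ Finset.range (P n), b n u := by
        have : P (n+1) = P n * a (n+1) := by simpa using hP (n+1) h1
        rw [this, sum_div_range' _ _ _ (ha (n+1))]
      have hlow : (a (n+1) : ℝ) * (∑ u ∈ Finset.range (P n), b n u) - f (n+1)
          ≤ ∑ v ∈ Finset.range (P (n+1)), b (n+1) v := by
        have h2 : ∀ v ∈ Finset.range (P (n+1)),
            b n (v / a (n+1)) - p (n+1) v ≤ b (n+1) v := by
          intro v _
          rw [hbrec (n+1) h1 v]
          simpa using le_max_right (0:ℝ) _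
        calc (a (n+1) : ℝ) * (∑ u ∈ Finset.range (P n), b n u) - f (n+1)
            ≤ (∑ v ∈ Finset.range (P (n+1)), b n (v / a (n+1)))
              - ∑ v ∈ Finset.range (P (n+1)), p (n+1) v := by
              rw [hsplit]; linarith [hpf (n+1) h1]
          _ = ∑ v ∈ Finset.range (P (n+1)), (b n (v / a (n+1)) - p (n+1) v) := by
              rw [Finset.sum_sub_distrib]
          _ ≤ ∑ v ∈ Finset.range (P (n+1)), b (n+1) v := Finset.sum_le_sum h2
      have ha0 : (0:ℝ) ≤ (a (n+1) : ℝ) := by positivity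
      have hmono : (a (n+1) : ℝ) * max 0 (F n) - f (n+1)
          ≤ (a (n+1) : ℝ) * (∑ u ∈ Finset.range (P n), b n u) - f (n+1) := by
        have := mul_le_mul_of_nonneg_left ih ha0
        linarith
      have hnn : (0:ℝ) ≤ ∑ v ∈ Finset.range (P (n+1)), b (n+1) v :=
        Finset.sum_nonneg fun v _ => hbn v
      rw [hGkey n]
      exact max_le hnn (le_trans hmono hlow)
  · refine ⟨fun i v => if i = 0 then 0 else min (f i) ((a i : ℝ) * max 0 (F (i-1))) / P i,
      fun i v => max 0 (F i) / P i, ?_, ?_, ?_, ?_, ?_⟩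
    · intro i v
      dsimp only
      split
      · exact le_refl 0
      · have hPi : (0:ℝ) < P i := by exact_mod_cast hPpos i
        have : (0:ℝ) ≤ min (f i) ((a i : ℝ) * max 0 (F (i-1))) :=
          le_min (hf i) (by positivity)
        positivity
    · intro i hi
      have hne' : i ≠ 0 := by omega
      have hPi0 : ((P i : ℝ)) ≠ 0 := by exact_mod_cast (hPpos i).ne'
      simp only [if_neg hne', Finset.sum_const, Finset.card_range, nsmul_eq_mul]
      rw [mul_comm, div_mul_cancel₀ _ hPi0]
      exact min_le_left _ _
    · intro v
      simp [hF0, hP0]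
    · intro i hi v
      obtain ⟨n, rfl⟩ : ∃ n, i = n + 1 := ⟨i - 1, by omega⟩
      have hne : n + 1 ≠ 0 := by omega
      simp only [if_neg hne, Nat.add_sub_cancel]
      have hPi : (0:ℝ) < (P (n+1) : ℝ) := by exact_mod_cast hPpos (n+1)
      have hPn : ((P (n+1) : ℝ)) = (P n : ℝ) * (a (n+1) : ℝ) := by
        have := hP (n+1) (by omega)
        simp at this
        exact_mod_cast this
      have hPn0 : (0:ℝ) < (P n : ℝ) := by exact_mod_cast hPpos n
      have ha1 : (0:ℝ) < (a (n+1) : ℝ) := by exact_mod_cast ha (n+1)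
      have hparent : max 0 (F n) / (P n : ℝ)
          = (a (n+1) : ℝ) * max 0 (F n) / (P (n+1) : ℝ) := by
        rw [hPn]; field_simp
      rw [hparent, hGkey n, div_sub_div_same]
      have hsub : (a (n+1) : ℝ) * max 0 (F n) - min (f (n+1)) ((a (n+1) : ℝ) * max 0 (F n))
          = max 0 ((a (n+1) : ℝ) * max 0 (F n) - f (n+1)) := by
        rcases le_total (f (n+1)) ((a (n+1) : ℝ) * max 0 (F n)) with h | h
        · rw [min_eq_left h, max_eq_right (sub_nonneg.mpr h)]
        · rw [min_eq_right h, max_eq_left (sub_nonpos.mpr h), sub_self]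
      rw [hsub]
      exact (max_eq_right (div_nonneg (le_max_left _ _) hPi.le)).symm
    · intro i
      have hPi0 : ((P i : ℝ)) ≠ 0 := by exact_mod_cast (hPpos i).ne'
      simp only [Finset.sum_const, Finset.card_range, nsmul_eq_mul]
      rw [mul_comm, div_mul_cancel₀ _ hPi0]
end

section
/- Let T be a locally finite leafless rooted tree with levels T_i, and (f_i) a non-negative sequence. If ∑_{i=1}^∞ f_i/|T_i| > 1, then spreading the protection f_i evenly over level i at each turn i contains the fire: the amount of fire reaching each vertex v ∈ T_n is max{0, 1 − ∑_{i≤n} f_i/|T_i|}, which is 0 for n large enough. -/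
lemma max_max_sub (a x : ℝ) (hx : 0 ≤ x) : max 0 (max 0 a - x) = max 0 (a - x) := by
  rcases le_or_gt a 0 with h | h
  · rw [max_eq_left h, max_eq_left (by linarith), max_eq_left (by linarith)]
  · rw [max_eq_right h.le]

theorem stmt_10 (V : Type*) (root : V) (par : V → V) (level : V → ℕ)
    (T : ℕ → Finset V) (f : ℕ → ℝ) (b : V → ℝ)
    (hroot : level root = 0)
    (hroot' : ∀ v, level v = 0 → v = root)
    (hpar : ∀ v, level v ≠ 0 → level (par v) + 1 = level v)
    (hT : ∀ i v, v ∈ T i ↔ level v = i)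
    (hne : ∀ i, (T i).Nonempty)
    (hf : ∀ i, 0 ≤ f i)
    (hsum : ∃ N : ℕ, 1 < ∑ i ∈ Finset.Icc 1 N, f i / (T i).card)
    (hb0 : b root = 1)
    (hb : ∀ v, level v ≠ 0 →
      b v = max 0 (b (par v) - f (level v) / (T (level v)).card)) :
    (∀ v, b v = max 0 (1 - ∑ i ∈ Finset.Icc 1 (level v), f i / (T i).card)) ∧
    ∃ N : ℕ, ∀ v, N ≤ level v → b v = 0 := by
  have hnonneg : ∀ i, 0 ≤ f i / (T i).card := fun i =>
    div_nonneg (hf i) (Nat.cast_nonneg _)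
  have key : ∀ n v, level v = n →
      b v = max 0 (1 - ∑ i ∈ Finset.Icc 1 n, f i / (T i).card) := by
    intro n
    induction n with
    | zero =>
      intro v hv
      rw [hroot' v hv, hb0]
      simp
    | succ n ih =>
      intro v hv
      have hne' : level v ≠ 0 := by omega
      have hplev : level (par v) = n := by have := hpar v hne'; omega
      rw [hb v hne', ih (par v) hplev, hv,
        Finset.sum_Icc_succ_top (by omega : 1 ≤ n + 1),
        max_max_sub _ _ (hnonneg (n+1)), sub_sub]
  constructor
  · intro v; exact key (level v) v rfl
  · obtain ⟨N, hN⟩ := hsum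
    refine ⟨N, fun v hv => ?_⟩
    rw [key (level v) v rfl, max_eq_left]
    have : (∑ i ∈ Finset.Icc 1 N, f i / (T i).card)
        ≤ ∑ i ∈ Finset.Icc 1 (level v), f i / (T i).card := by
      apply Finset.sum_le_sum_of_subset_of_nonneg
      · exact Finset.Icc_subset_Icc le_rfl hv
      · intro i _ _; exact hnonneg i
    linarith
end

section
/- Let (t_i) be a non-decreasing sequence of positive integers tending to +∞, and (f_i) a sequence of non-negative reals such that ∑ f_i/t_i converges. Then there exists a sequence (a_i) of positive integers and a rank N such that, setting P_i = ∏_{j=1}^i a_j, we have t_i/2 ≤ P_i ≤ t_i for all i ≥ N, and ∑_{i=1}^n f_i/P_i < 1 for all n. -/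
/-!
Take `M` with `∑_{i ≥ M} f i / t i < 1/4` and `N ≥ M` with `t N > 4 ∑_{i < M} f i`, start the
products at `P_i = t N` for `1 ≤ i ≤ N`, and afterwards multiply by `⌊t_i / P_{i-1}⌋`, the largest
factor keeping `P_i ≤ t_i`; since `t` is monotone this factor is at least `1`, and it keeps
`t_i < 2 P_i`. The terms with `i < M` then contribute at most `∑_{i < M} f i / t N < 1/4`, and the
others at most `2 ∑_{i ≥ M} f i / t i < 1/2`.
-/

open Filter Finset

theorem Summable.eventually_sum_Ico_lt {g : ℕ → ℝ} (hg : ∀ i, 0 ≤ g i) (hs : Summable g)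
    {ε : ℝ} (hε : 0 < ε) : ∀ᶠ M in atTop, ∀ n, ∑ i ∈ Ico M n, g i < ε := by
  filter_upwards [hs.hasSum.tendsto_sum_nat.eventually (lt_mem_nhds (sub_lt_self _ hε))]
    with M hM n
  rcases le_total n M with hnM | hMn
  · simpa [Ico_eq_empty_of_le hnM] using hε
  · have hsplit := sum_range_add_sum_Ico g hMn
    have hle := hs.sum_le_tsum (range n) fun i _ => hg i
    linarith

def greedyProd (t : ℕ → ℕ) (N : ℕ) : ℕ → ℕ
  | 0 => 1
  | i + 1 => if i + 1 ≤ N then t N else greedyProd t N i * (t (i + 1) / greedyProd t N i)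

def greedyFactor (t : ℕ → ℕ) (N i : ℕ) : ℕ :=
  greedyProd t N i / greedyProd t N (i - 1)

section greedyProd

variable {t : ℕ → ℕ} {N i : ℕ}

theorem greedyProd_of_le (h1 : 1 ≤ i) (h2 : i ≤ N) : greedyProd t N i = t N := by
  obtain ⟨j, rfl⟩ := Nat.exists_eq_add_of_le' h1
  rw [greedyProd, if_pos h2]

theorem greedyProd_succ_of_le (h : N ≤ i) :
    greedyProd t N (i + 1) = greedyProd t N i * (t (i + 1) / greedyProd t N i) := by
  rw [greedyProd, if_neg (by omega)]

theorem greedyProd_dvd_succ (t : ℕ → ℕ) (N i : ℕ) :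
    greedyProd t N i ∣ greedyProd t N (i + 1) := by
  rcases le_or_gt N i with hNi | hiN
  · rw [greedyProd_succ_of_le hNi]
    exact dvd_mul_right _ _
  · rcases Nat.eq_zero_or_pos i with rfl | hi
    · exact one_dvd _
    · rw [greedyProd_of_le hi hiN.le, greedyProd_of_le (by omega) hiN]

theorem prod_greedyFactor (t : ℕ → ℕ) (N n : ℕ) :
    ∏ j ∈ Icc 1 n, greedyFactor t N j = greedyProd t N n := by
  induction n with
  | zero => rfl
  | succ n ih =>
    rw [prod_Icc_succ_top (by omega), ih, greedyFactor, Nat.add_sub_cancel,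
      Nat.mul_div_cancel' (greedyProd_dvd_succ t N n)]

theorem greedyProd_le_and_lt_two_mul (hmono : Monotone t) (hN : 1 ≤ N) (htN : 1 ≤ t N)
    (hi : N ≤ i) :
    greedyProd t N i ≤ t i ∧ t i < 2 * greedyProd t N i := by
  induction i, hi using Nat.le_induction with
  | base =>
    rw [greedyProd_of_le hN le_rfl]
    omega
  | succ i hNi ih =>
    set P := greedyProd t N i
    set q := t (i + 1) / P
    have hP : 0 < P := by omega
    have hq : 1 ≤ q := (Nat.one_le_div_iff hP).mpr (ih.1.trans (hmono i.le_succ))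
    rw [greedyProd_succ_of_le hNi]
    refine ⟨Nat.mul_div_le _ _, ?_⟩
    calc t (i + 1) < P * (q + 1) := Nat.lt_mul_div_succ _ hP
      _ ≤ P * (2 * q) := Nat.mul_le_mul_left _ (by omega)
      _ = 2 * (P * q) := by ring

theorem greedyProd_pos (hmono : Monotone t) (hN : 1 ≤ N) (htN : 1 ≤ t N)
    (i : ℕ) : 0 < greedyProd t N i := by
  rcases Nat.eq_zero_or_pos i with rfl | hi
  · exact Nat.one_pos
  rcases le_total i N with hiN | hNi
  · rw [greedyProd_of_le hi hiN]
    exact htN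
  · have := greedyProd_le_and_lt_two_mul hmono hN htN hNi
    omega

theorem le_two_mul_greedyProd (hmono : Monotone t) (hN : 1 ≤ N) (htN : 1 ≤ t N)
    (hi : 1 ≤ i) : t i ≤ 2 * greedyProd t N i := by
  rcases le_total i N with hiN | hNi
  · rw [greedyProd_of_le hi hiN]
    have := hmono hiN
    omega
  · exact (greedyProd_le_and_lt_two_mul hmono hN htN hNi).2.le

theorem one_le_greedyFactor (hmono : Monotone t) (hN : 1 ≤ N) (htN : 1 ≤ t N)
    (i : ℕ) : 1 ≤ greedyFactor t N i := by
  cases i with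
  | zero => simp [greedyFactor, greedyProd]
  | succ i =>
    have hpos := greedyProd_pos hmono hN htN
    exact Nat.div_pos (Nat.le_of_dvd (hpos _) (greedyProd_dvd_succ t N i)) (hpos _)

theorem div_greedyProd_le (hmono : Monotone t) (hN : 1 ≤ N) (htN : 1 ≤ t N)
    {x : ℝ} (hx : 0 ≤ x) (hi : 1 ≤ i) (hti : 0 < t i) :
    x / greedyProd t N i ≤ 2 * (x / t i) := by
  have hle : (t i : ℝ) ≤ 2 * greedyProd t N i := by
    exact_mod_cast le_two_mul_greedyProd hmono hN htN hi
  calc x / greedyProd t N i = 2 * x / (2 * greedyProd t N i) := by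
        rw [mul_div_mul_left _ _ two_ne_zero]
    _ ≤ 2 * x / t i := div_le_div_of_nonneg_left (by positivity) (by exact_mod_cast hti) hle
    _ = 2 * (x / t i) := mul_div_assoc _ _ _

theorem sum_div_greedyProd_lt_one (hmono : Monotone t) (hN : 1 ≤ N) (htN : 1 ≤ t N)
    {f : ℕ → ℝ} (hf : ∀ i, 0 ≤ f i) {M : ℕ}
    (hM : ∀ n, ∑ i ∈ Ico M n, f i / t i < 1 / 4) (htM : 1 ≤ t M) (hMN : M ≤ N)
    (hfN : 4 * ∑ i ∈ range M, f i < t N) (n : ℕ) :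
    ∑ i ∈ Icc 1 n, f i / greedyProd t N i < 1 := by
  have htN' : (0 : ℝ) < t N := by exact_mod_cast htN
  have head : ∑ i ∈ Icc 1 n with i < M, f i / greedyProd t N i < 1 / 4 :=
    calc ∑ i ∈ Icc 1 n with i < M, f i / greedyProd t N i
        = ∑ i ∈ Icc 1 n with i < M, f i / t N := by
          refine sum_congr rfl fun i hi => ?_
          simp only [mem_filter, mem_Icc] at hi
          rw [greedyProd_of_le hi.1.1 (by omega)]
      _ ≤ ∑ i ∈ range M, f i / t N := by
          refine sum_le_sum_of_subset_of_nonneg (fun i hi => ?_) fun i _ _ => by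
            have := hf i; positivity
          simp only [mem_filter, mem_range] at hi ⊢
          exact hi.2
      _ < 1 / 4 := by
          rw [← sum_div, div_lt_iff₀ htN']
          linarith
  have tail : ∑ i ∈ Icc 1 n with ¬i < M, f i / greedyProd t N i < 1 / 2 :=
    calc ∑ i ∈ Icc 1 n with ¬i < M, f i / greedyProd t N i
        ≤ ∑ i ∈ Icc 1 n with ¬i < M, 2 * (f i / t i) := by
          refine sum_le_sum fun i hi => ?_
          simp only [mem_filter, mem_Icc, not_lt] at hi
          exact div_greedyProd_le hmono hN htN (hf i) hi.1.1 (htM.trans (hmono hi.2))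
      _ ≤ ∑ i ∈ Ico M (n + 1), 2 * (f i / t i) := by
          refine sum_le_sum_of_subset_of_nonneg (fun i hi => ?_) fun i _ _ => by
            have := hf i; positivity
          simp only [mem_filter, mem_Icc, mem_Ico, not_lt] at hi ⊢
          omega
      _ < 1 / 2 := by
          rw [← mul_sum]
          linarith [hM (n + 1)]
  rw [← sum_filter_add_sum_filter_not _ (· < M)]
  linarith

end greedyProd

theorem stmt_11_general (t : ℕ → ℕ) (f : ℕ → ℝ)
    (hmono : Monotone t)
    (htop : Filter.Tendsto t Filter.atTop Filter.atTop)
    (hf : ∀ i, 0 ≤ f i)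
    (hsum : Summable (fun i => f i / t i)) :
    ∃ a : ℕ → ℕ, (∀ i, 1 ≤ a i) ∧
      ∃ N : ℕ, (∀ i, N ≤ i →
          (t i : ℝ) / 2 ≤ ∏ j ∈ Finset.Icc 1 i, (a j : ℝ) ∧
          (∏ j ∈ Finset.Icc 1 i, (a j : ℝ)) ≤ t i) ∧
        ∀ n : ℕ, ∑ i ∈ Finset.Icc 1 n, f i / ∏ j ∈ Finset.Icc 1 i, (a j : ℝ) < 1 := by
  obtain ⟨M, hM, htM⟩ := ((hsum.eventually_sum_Ico_lt (fun i => by have := hf i; positivity)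
    (by norm_num : (0 : ℝ) < 1 / 4)).and (htop.eventually_ge_atTop 1)).exists
  obtain ⟨K, hK⟩ := exists_nat_gt (4 * ∑ i ∈ range M, f i)
  obtain ⟨N, hKN, hMN⟩ :=
    ((htop.eventually_ge_atTop K).and (eventually_ge_atTop (max M 1))).exists
  have hfN : 4 * ∑ i ∈ range M, f i < t N := hK.trans_le (by exact_mod_cast hKN)
  have htN : 1 ≤ t N := htM.trans (hmono (le_of_max_le_left hMN))
  have hN : 1 ≤ N := le_of_max_le_right hMN
  have hprod (i : ℕ) : ∏ j ∈ Icc 1 i, (greedyFactor t N j : ℝ) = greedyProd t N i := by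
    rw [← Nat.cast_prod, prod_greedyFactor]
  refine ⟨greedyFactor t N, one_le_greedyFactor hmono hN htN, N, fun i hi => ?_, fun n => ?_⟩
  · obtain ⟨hle, hlt⟩ := greedyProd_le_and_lt_two_mul hmono hN htN hi
    rw [hprod]
    constructor
    · have : (t i : ℝ) ≤ 2 * greedyProd t N i := by exact_mod_cast hlt.le
      linarith
    · exact_mod_cast hle
  · simp only [hprod]
    exact sum_div_greedyProd_lt_one hmono hN htN hf hM htM (le_of_max_le_left hMN) hfN n

theorem stmt_11 (t : ℕ → ℕ) (f : ℕ → ℝ)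
    (hmono : Monotone t) (hpos : ∀ i, 1 ≤ t i)
    (htop : Filter.Tendsto t Filter.atTop Filter.atTop)
    (hf : ∀ i, 0 ≤ f i)
    (hsum : Summable (fun i => f i / t i)) :
    ∃ a : ℕ → ℕ, (∀ i, 1 ≤ a i) ∧
      ∃ N : ℕ, (∀ i, N ≤ i →
          (t i : ℝ) / 2 ≤ ∏ j ∈ Finset.Icc 1 i, (a j : ℝ) ∧
          (∏ j ∈ Finset.Icc 1 i, (a j : ℝ)) ≤ t i) ∧
        ∀ n : ℕ, ∑ i ∈ Finset.Icc 1 n, f i / ∏ j ∈ Finset.Icc 1 i, (a j : ℝ) < 1 :=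
  stmt_11_general t f hmono htop hf hsum
end

section
/- Let (t_i) be a non-decreasing positive integer sequence tending to +∞ and (f_i) a non-negative real sequence with partial sums S_i = ∑_{k≤i} f_k. If S_i → +∞ and S_i/t_i does not tend to 0, then ∑ f_i/t_i diverges. -/
theorem stmt_12 (t : ℕ → ℕ) (f : ℕ → ℝ)
    (hmono : Monotone t) (hpos : ∀ i, 1 ≤ t i)
    (htop : Filter.Tendsto t Filter.atTop Filter.atTop)
    (hf : ∀ i, 0 ≤ f i)
    (hS : Filter.Tendsto (fun n : ℕ => ∑ k ∈ Finset.Icc 1 n, f k)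
      Filter.atTop Filter.atTop)
    (hratio : ¬ Filter.Tendsto (fun i : ℕ => (∑ k ∈ Finset.Icc 1 i, f k) / t i)
      Filter.atTop (nhds 0)) :
    ¬ Summable (fun i => f i / t i) := by
  intro hsum
  apply hratio
  rw [Metric.tendsto_atTop]
  intro ε hε
  set g : ℕ → ℝ := fun i => f i / t i with hgdef
  have hg0 : ∀ i, 0 ≤ g i := fun i => div_nonneg (hf i) (Nat.cast_nonneg _)
  -- choose m so that the tail of ∑ g is < ε/2
  have hpart : Filter.Tendsto (fun n => ∑ i ∈ Finset.range n, g i)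
      Filter.atTop (nhds (∑' i, g i)) := hsum.hasSum.tendsto_sum_nat
  obtain ⟨m, hm⟩ := (Metric.tendsto_atTop.1 hpart) (ε / 2) (by linarith)
  have hIic : (∑' i, g i) - ∑ i ∈ Finset.Iic m, g i < ε / 2 := by
    have h1 := hm (m + 1) (Nat.le_succ m)
    have h2 : ∑ i ∈ Finset.range (m + 1), g i ≤ ∑' i, g i :=
      Summable.sum_le_tsum _ (fun i _ => hg0 i) hsum
    rw [Real.dist_eq, abs_sub_lt_iff] at h1
    have : Finset.range (m + 1) = Finset.Iic m := by
      ext x; simp [Nat.lt_succ_iff]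
    rw [this] at h1 h2
    linarith [h1.2]
  have htail : ∀ n, (∑ i ∈ Finset.Ioc m n, g i) < ε / 2 := by
    intro n
    have hdisj : Disjoint (Finset.Iic m) (Finset.Ioc m n) := by
      simp only [Finset.disjoint_left, Finset.mem_Iic, Finset.mem_Ioc]
      omega
    have hle : ∑ i ∈ Finset.Iic m ∪ Finset.Ioc m n, g i ≤ ∑' i, g i :=
      Summable.sum_le_tsum _ (fun i _ => hg0 i) hsum
    rw [Finset.sum_union hdisj] at hle
    linarith
  -- choose N so that (∑ k ∈ Icc 1 m, f k) / t n < ε/2 for n ≥ N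
  set Sm : ℝ := ∑ k ∈ Finset.Icc 1 m, f k with hSm
  have hSm0 : 0 ≤ Sm := Finset.sum_nonneg fun k _ => hf k
  set K : ℕ := ⌈Sm / (ε / 2)⌉₊ + 1 with hK
  obtain ⟨N, hN⟩ := Filter.eventually_atTop.1 (htop.eventually_ge_atTop K)
  refine ⟨max N (m + 1), fun n hn => ?_⟩
  have hnN : N ≤ n := le_trans (le_max_left _ _) hn
  have hmn : m ≤ n := by
    have := le_trans (le_max_right _ _) hn; omega
  have htn : K ≤ t n := hN n hnN
  have htn0 : (0:ℝ) < t n := by exact_mod_cast hpos n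
  have htnK : (K:ℝ) ≤ t n := by exact_mod_cast htn
  have hK0 : (0:ℝ) < K := by positivity
  -- bound Sm / t n
  have hb1 : Sm / t n < ε / 2 := by
    have h1 : Sm / (ε / 2) < K := by
      have := Nat.le_ceil (Sm / (ε / 2))
      have : Sm / (ε / 2) ≤ (⌈Sm / (ε / 2)⌉₊ : ℝ) := this
      have hcast : ((⌈Sm / (ε / 2)⌉₊ : ℕ) : ℝ) < K := by exact_mod_cast Nat.lt_succ_self _
      linarith
    have hε2 : (0:ℝ) < ε / 2 := by linarith
    have : Sm < (ε / 2) * K := by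
      rw [div_lt_iff₀ hε2] at h1; linarith [h1]
    calc Sm / t n ≤ Sm / K := by
          apply div_le_div_of_nonneg_left hSm0 hK0 htnK
      _ < ε / 2 := by rw [div_lt_iff₀ hK0]; linarith
  -- split the sum
  have hsplit : (∑ k ∈ Finset.Ioc 0 m, f k) + ∑ k ∈ Finset.Ioc m n, f k
      = ∑ k ∈ Finset.Ioc 0 n, f k := Finset.sum_Ioc_consecutive f (Nat.zero_le m) hmn
  have hIcc : ∀ j : ℕ, Finset.Icc 1 j = Finset.Ioc 0 j := by
    intro j; ext x; simp [Nat.lt_iff_add_one_le]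
  -- the middle sum bound
  have hmid : (∑ k ∈ Finset.Ioc m n, f k) / t n ≤ ∑ i ∈ Finset.Ioc m n, g i := by
    rw [Finset.sum_div]
    apply Finset.sum_le_sum
    intro k hk
    have hk' : k ≤ n := (Finset.mem_Ioc.1 hk).2
    have htk : (0:ℝ) < t k := by exact_mod_cast hpos k
    have htkn : (t k : ℝ) ≤ t n := by exact_mod_cast hmono hk'
    exact div_le_div_of_nonneg_left (hf k) htk htkn
  have hSn0 : 0 ≤ (∑ k ∈ Finset.Icc 1 n, f k) / t n :=
    div_nonneg (Finset.sum_nonneg fun k _ => hf k) htn0.le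
  rw [Real.dist_eq, sub_zero, abs_of_nonneg hSn0]
  have : (∑ k ∈ Finset.Icc 1 n, f k) / t n
      = Sm / t n + (∑ k ∈ Finset.Ioc m n, f k) / t n := by
    rw [hIcc n, hSm, hIcc m, ← hsplit, add_div]
  rw [this]
  have := htail n
  linarith
end

section
/- In the firefighter game on a finite graph G with fire starting at vertex r, the game terminates after at most L_r(G) turns, where L_r(G) is the maximum length of an induced path in G with extremity r. Specifically, if for some vertex v the burning amount strictly increases at turn i, i.e. b_i(v) > b_{i−1}(v), then there exists an induced path (r = u_0, u_1, …, u_i = v) of length i in G along which the burning amounts b_j(u_j) are non-increasing. -/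
/-!
Induction on the turn. If `b` increases at `v` on turn `n + 1`, the new value comes from a
neighbour `w`: `b (n + 1) v = b n w - pc (n + 1) v`. Since protections only grow, `w` must itself
have increased on turn `n`, so by induction it ends a suitable induced path of length `n`, and the
burning amounts along that path are at least `b n w ≥ b (n + 1) v`. Appending `v` keeps the path
induced: were `v` on the path or adjacent to an earlier vertex `u j`, the fire would already have
reached `v` at that amount by turn `j + 1 ≤ n`, so it could not increase on turn `n + 1`.
-/

open Function

section

variable {V : Type*}

structure IsInducedPath (G : SimpleGraph V) (u : ℕ → V) (n : ℕ) : Prop where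
  adj : ∀ j < n, G.Adj (u j) (u (j + 1))
  injOn : Set.InjOn u (Set.Iic n)
  not_adj : ∀ j k, k ≤ n → j + 1 < k → ¬ G.Adj (u j) (u k)

namespace IsInducedPath

variable {G : SimpleGraph V} {u : ℕ → V} {n : ℕ} {v : V}

theorem zero (G : SimpleGraph V) (u : ℕ → V) : IsInducedPath G u 0 where
  adj _ h := absurd h (Nat.not_lt_zero _)
  injOn := by simp [Set.InjOn]
  not_adj _ _ hk hjk := absurd hjk (by omega)

theorem update (hu : IsInducedPath G u n) (hadj : G.Adj (u n) v) (hne : ∀ j ≤ n, u j ≠ v)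
    (hnadj : ∀ j < n, ¬ G.Adj (u j) v) : IsInducedPath G (update u (n + 1) v) (n + 1) := by
  have old : ∀ j ≤ n, Function.update u (n + 1) v j = u j := fun j hj =>
    update_of_ne (by omega) _ _
  refine ⟨fun j hj => ?_, fun j hj k hk hjk => ?_, fun j k hk hjk => ?_⟩
  · rcases Nat.lt_succ_iff_lt_or_eq.mp hj with hj | rfl
    · rw [old j hj.le, old (j + 1) hj]
      exact hu.adj j hj
    · rw [old j le_rfl, update_self]
      exact hadj
  · simp only [Set.mem_Iic] at hj hk
    rcases Nat.lt_or_eq_of_le hj with hj | rfl <;> rcases Nat.lt_or_eq_of_le hk with hk | rfl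
    · rw [old j (by omega), old k (by omega)] at hjk
      exact hu.injOn (Set.mem_Iic.2 (by omega)) (Set.mem_Iic.2 (by omega)) hjk
    · rw [old j (by omega), update_self] at hjk
      exact absurd hjk (hne j (by omega))
    · rw [old k (by omega), update_self] at hjk
      exact absurd hjk.symm (hne k (by omega))
    · rfl
  · rw [old j (by omega)]
    rcases Nat.lt_or_eq_of_le hk with hk | rfl
    · rw [old k (by omega)]
      exact hu.not_adj j k (by omega) hjk
    · rw [update_self]
      exact hnadj j (by omega)

end IsInducedPath

theorem antitoneOn_nat_Iic_of_succ_le {α : Type*} [Preorder α] {f : ℕ → α} {n : ℕ}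
    (hf : ∀ j < n, f (j + 1) ≤ f j) : AntitoneOn f (Set.Iic n) := by
  intro a _ c hc hac
  induction c, hac using Nat.le_induction with
  | base => exact le_rfl
  | succ c _ ih =>
    have hc : c + 1 ≤ n := hc
    exact (hf c hc).trans (ih (Set.mem_Iic.2 (Nat.le_of_succ_le hc)))

variable [Fintype V] (G : SimpleGraph V) [DecidableRel G.Adj] (b pc : ℕ → V → NNReal)

def FireSpreads : Prop :=
  ∀ i v, b (i + 1) v = max ((G.neighborFinset v).sup (b i) - pc (i + 1) v) (b i v)

variable {G b pc}

namespace FireSpreads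

variable (hs : FireSpreads G b pc)
include hs

theorem monotone (v : V) : Monotone (b · v) :=
  monotone_nat_of_le_succ fun i => (hs i v).symm ▸ le_max_right _ _

theorem sub_le_succ {v w : V} (hadj : G.Adj v w) (i : ℕ) : b i w - pc (i + 1) v ≤ b (i + 1) v :=
  (hs i v).symm ▸ le_max_of_le_left
    (tsub_le_tsub_right (Finset.le_sup ((G.mem_neighborFinset v w).2 hadj)) _)

theorem exists_source {i : ℕ} {v : V} (hv : b i v < b (i + 1) v) :
    ∃ w, G.Adj v w ∧ b (i + 1) v = b i w - pc (i + 1) v := by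
  have hmax : b (i + 1) v = (G.neighborFinset v).sup (b i) - pc (i + 1) v := by
    rw [hs i v] at hv ⊢
    exact max_eq_left (not_le.1 fun h => hv.ne (max_eq_right h).symm).le
  have hsup : b i v < (G.neighborFinset v).sup (b i) := hv.trans_le (hmax ▸ tsub_le_self)
  obtain ⟨w₀, hw₀, -⟩ := Finset.lt_sup_iff.1 hsup
  obtain ⟨w, hw, hwmax⟩ := Finset.exists_mem_eq_sup _ ⟨w₀, hw₀⟩ (b i)
  exact ⟨w, (G.mem_neighborFinset v w).1 hw, hwmax ▸ hmax⟩

theorem ne_of_lt_succ {n j : ℕ} {v x : V} (hv : b n v < b (n + 1) v) (hj : j ≤ n)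
    (hle : b (n + 1) v ≤ b j x) : x ≠ v := by
  rintro rfl
  exact (hle.trans (hs.monotone x hj)).not_gt hv

theorem not_adj_of_lt_succ (hpc : ∀ v, Monotone (pc · v)) {n j : ℕ} {v x : V}
    (hv : b n v < b (n + 1) v) (hj : j < n) (hle : b (n + 1) v ≤ b j x - pc (n + 1) v) :
    ¬ G.Adj v x := fun hadj =>
  (calc b (n + 1) v ≤ b j x - pc (j + 1) v := hle.trans (tsub_le_tsub_left (hpc v (by omega)) _)
    _ ≤ b (j + 1) v := hs.sub_le_succ hadj j
    _ ≤ b n v := hs.monotone v hj).not_gt hv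

theorem lt_succ_of_source (hpc : ∀ v, Monotone (pc · v)) {i : ℕ} {v w : V}
    (hv : b (i + 1) v < b (i + 2) v) (hadj : G.Adj v w)
    (hsrc : b (i + 2) v = b (i + 1) w - pc (i + 2) v) : b i w < b (i + 1) w := by
  by_contra! h
  exact hs.not_adj_of_lt_succ hpc hv i.lt_succ_self (hsrc.trans_le (tsub_le_tsub_right h _)) hadj

theorem extend (hpc : ∀ v, Monotone (pc · v)) {n : ℕ} {u : ℕ → V} {v w : V}
    (hu : IsInducedPath G u n) (hun : u n = w)
    (hdec : ∀ j < n, b (j + 1) (u (j + 1)) ≤ b j (u j)) (hv : b n v < b (n + 1) v)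
    (hadj : G.Adj v w) (hsrc : b (n + 1) v = b n w - pc (n + 1) v) :
    IsInducedPath G (update u (n + 1) v) (n + 1) ∧
      ∀ j < n + 1, b (j + 1) (update u (n + 1) v (j + 1)) ≤ b j (update u (n + 1) v j) := by
  have hw : ∀ j ≤ n, b (n + 1) v ≤ b j (u j) - pc (n + 1) v := fun j hj =>
    hsrc ▸ tsub_le_tsub_right (hun ▸ antitoneOn_nat_Iic_of_succ_le (f := fun j => b j (u j)) hdec
      (Set.mem_Iic.2 hj) Set.self_mem_Iic hj) _
  refine ⟨hu.update (hun ▸ hadj.symm)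
    (fun j hj => hs.ne_of_lt_succ hv hj ((hw j hj).trans tsub_le_self))
    (fun j hj h => hs.not_adj_of_lt_succ hpc hv hj (hw j hj.le) h.symm), fun j hj => ?_⟩
  rcases Nat.lt_succ_iff_lt_or_eq.1 hj with hj | rfl
  · rw [update_of_ne (by omega), update_of_ne (by omega)]
    exact hdec j hj
  · rw [update_self, update_of_ne (by omega), hun, hsrc]
    exact tsub_le_self

theorem exists_inducedPath (hpc : ∀ v, Monotone (pc · v)) {r : V}
    (hb0 : ∀ v, v ≠ r → b 0 v = 0) (n : ℕ) (v : V) (hv : b n v < b (n + 1) v) :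
    ∃ u : ℕ → V, u 0 = r ∧ u (n + 1) = v ∧ IsInducedPath G u (n + 1) ∧
      ∀ j < n + 1, b (j + 1) (u (j + 1)) ≤ b j (u j) := by
  induction n generalizing v with
  | zero =>
    obtain ⟨w, hadj, hsrc⟩ := hs.exists_source hv
    obtain rfl : w = r := by
      by_contra h
      rw [hb0 w h, zero_tsub] at hsrc
      simp [hsrc] at hv
    obtain ⟨hu, hdec⟩ := hs.extend hpc (IsInducedPath.zero G fun _ => w) rfl (by simp) hv hadj hsrc
    exact ⟨_, by simp, update_self _ _ _, hu, hdec⟩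
  | succ n ih =>
    obtain ⟨w, hadj, hsrc⟩ := hs.exists_source hv
    obtain ⟨u, hu0, hun, hu, hdec⟩ := ih w (hs.lt_succ_of_source hpc hv hadj hsrc)
    obtain ⟨hu', hdec'⟩ := hs.extend hpc hu hun hdec hv hadj hsrc
    exact ⟨_, by rw [update_of_ne (by omega), hu0], update_self _ _ _, hu', hdec'⟩

end FireSpreads

end

theorem stmt_13_general (V : Type*) [Fintype V]
    (G : SimpleGraph V) [DecidableRel G.Adj]
    (r : V) (L : ℕ) (b pc : ℕ → V → NNReal)
    (hL : ∀ (n : ℕ) (u : ℕ → V), u 0 = r →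
      (∀ j < n, G.Adj (u j) (u (j + 1))) →
      Set.InjOn u (Set.Iic n) →
      (∀ j k, k ≤ n → j + 1 < k → ¬ G.Adj (u j) (u k)) → n ≤ L)
    (hb0 : ∀ v, v ≠ r → b 0 v = 0)
    (hpcmono : ∀ i v, pc i v ≤ pc (i + 1) v)
    (hspread : ∀ i, 1 ≤ i → ∀ v,
      b i v = max ((G.neighborFinset v).sup (fun v' => b (i - 1) v') - pc i v)
        (b (i - 1) v)) :
    (∀ i, 1 ≤ i → ∀ v, b (i - 1) v < b i v →
      ∃ u : ℕ → V, u 0 = r ∧ u i = v ∧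
        (∀ j < i, G.Adj (u j) (u (j + 1))) ∧
        Set.InjOn u (Set.Iic i) ∧
        (∀ j k, k ≤ i → j + 1 < k → ¬ G.Adj (u j) (u k)) ∧
        (∀ j < i, b (j + 1) (u (j + 1)) ≤ b j (u j))) ∧
    (∀ i, L < i → ∀ v, b i v = b (i - 1) v) := by
  have hs : FireSpreads G b pc := fun i v => by simpa using hspread (i + 1) (by omega) v
  have hpc : ∀ v, Monotone (pc · v) := fun v => monotone_nat_of_le_succ (hpcmono · v)
  refine ⟨fun i hi v hv => ?_, fun i hi v => ?_⟩
  · obtain ⟨n, rfl⟩ : ∃ n, i = n + 1 := ⟨i - 1, by omega⟩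
    obtain ⟨u, hu0, hun, hu, hdec⟩ := hs.exists_inducedPath hpc hb0 n v (by simpa using hv)
    exact ⟨u, hu0, hun, hu.adj, hu.injOn, hu.not_adj, hdec⟩
  · obtain ⟨n, rfl⟩ : ∃ n, i = n + 1 := ⟨i - 1, by omega⟩
    rw [Nat.add_sub_cancel]
    refine le_antisymm (not_lt.1 fun hv => ?_) (hs.monotone v n.le_succ)
    obtain ⟨u, hu0, -, hu, -⟩ := hs.exists_inducedPath hpc hb0 n v hv
    exact absurd (hL _ u hu0 hu.adj hu.injOn hu.not_adj) (by omega)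

theorem stmt_13 (V : Type*) [Fintype V] [DecidableEq V]
    (G : SimpleGraph V) [DecidableRel G.Adj]
    (r : V) (L : ℕ) (b pc : ℕ → V → NNReal)
    (hL : ∀ (n : ℕ) (u : ℕ → V), u 0 = r →
      (∀ j < n, G.Adj (u j) (u (j + 1))) →
      Set.InjOn u (Set.Iic n) →
      (∀ j k, k ≤ n → j + 1 < k → ¬ G.Adj (u j) (u k)) → n ≤ L)
    (hb0r : b 0 r = 1) (hb0 : ∀ v, v ≠ r → b 0 v = 0)
    (hpc0 : ∀ v, pc 0 v = 0)
    (hpcmono : ∀ i v, pc i v ≤ pc (i + 1) v)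
    (hbound : ∀ i v, b i v + pc i v ≤ 1)
    (hspread : ∀ i, 1 ≤ i → ∀ v,
      b i v = max ((G.neighborFinset v).sup (fun v' => b (i - 1) v') - pc i v)
        (b (i - 1) v)) :
    (∀ i, 1 ≤ i → ∀ v, b (i - 1) v < b i v →
      ∃ u : ℕ → V, u 0 = r ∧ u i = v ∧
        (∀ j < i, G.Adj (u j) (u (j + 1))) ∧
        Set.InjOn u (Set.Iic i) ∧
        (∀ j k, k ≤ i → j + 1 < k → ¬ G.Adj (u j) (u k)) ∧
        (∀ j < i, b (j + 1) (u (j + 1)) ≤ b j (u j))) ∧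
    (∀ i, L < i → ∀ v, b i v = b (i - 1) v) :=
  stmt_13_general V G r L b pc hL hb0 hpcmono hspread
end
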